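/- Intersecting Lipschitz Graphs: Suppose 0 ≤ σ < χ/8 < 1/8. Let F, G be m-dimensional subspaces of ℝ^n with ∠(F,G) ≥ χ, and let f : F → F⊥, g : G → G⊥ be Lipschitz with f(0) = 0 = g(0), Lip f ≤ σ, Lip g ≤ σ. Then there exist an integer j with 0 ≤ j ≤ m−1, a j-dimensional subspace X of ℝ^n, and a Lipschitz function S : X → X⊥ such that graph f ∩ graph g ⊆ graph S. In particular, the Hausdorff dimension of graph f ∩ graph g is at most m−1. -/

import Mathlib

open Metric Real Filter

noncomputable def pr {n : ℕ} (F : Submodule ℝ (EuclideanSpace ℝ (Fin n))) :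
    EuclideanSpace ℝ (Fin n) →L[ℝ] EuclideanSpace ℝ (Fin n) :=
  F.subtypeL.comp (Submodule.orthogonalProjection F)

noncomputable def graphSet {n : ℕ} (F : Submodule ℝ (EuclideanSpace ℝ (Fin n)))
    (u : F → Fᗮ) : Set (EuclideanSpace ℝ (Fin n)) :=
  Set.range fun z : F => (z : EuclideanSpace ℝ (Fin n)) + (u z : EuclideanSpace ℝ (Fin n))

noncomputable def cone {n : ℕ} (x : EuclideanSpace ℝ (Fin n)) (β : ℝ)
    (F : Submodule ℝ (EuclideanSpace ℝ (Fin n))) : Set (EuclideanSpace ℝ (Fin n)) :=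
  {z | ‖pr Fᗮ (z - x)‖ ≤ β * ‖pr F (z - x)‖}


/-!
Write `P_W` for the orthogonal projection onto `W`. The operator `P_F - P_G` sends `x` to
`P_{G⊥} P_F x - P_G P_{F⊥} x`, a sum of orthogonal vectors, and `‖P_G P_{F⊥}‖ = ‖P_{F⊥} P_G‖`
by taking adjoints; so after possibly swapping `F` and `G` we get `‖P_{G⊥} P_F‖ ≥ χ`. A top right
singular vector `e ∈ F` of `P_{G⊥}` restricted to `F` then satisfies
`χ |⟪a, e⟫| ≤ ‖P_{G⊥} a‖` for all `a ∈ F`.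

The difference `d` of two points of `graph f ∩ graph g` lies in the `σ`-cones around both `F` and
`G`. Then `a = P_F d` is almost in `G`, hence almost orthogonal to `e`, and `‖d‖ ≤ 3 ‖P_X d‖` for
the `(m-1)`-plane `X = F ∩ e⊥`. So `P_X` is injective on the intersection with a `3`-Lipschitz
inverse, and the intersection is contained in the graph of a Lipschitz extension of that inverse.
-/

open ContinuousLinearMap Module Submodule
open scoped InnerProduct RealInnerProductSpace NNReal ENNReal

section Projection

variable {E : Type*} [NormedAddCommGroup E] [InnerProductSpace ℝ E] [CompleteSpace E]
  (U V : Submodule ℝ E) [U.HasOrthogonalProjection] [V.HasOrthogonalProjection]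

theorem norm_starProjection_comp_comm :
    ‖U.starProjection ∘L V.starProjection‖ = ‖V.starProjection ∘L U.starProjection‖ := by
  rw [← adjoint.norm_map (V.starProjection ∘L U.starProjection), adjoint_comp,
    (isSelfAdjoint_starProjection U).adjoint_eq, (isSelfAdjoint_starProjection V).adjoint_eq]

theorem norm_starProjection_sub_le_max :
    ‖U.starProjection - V.starProjection‖ ≤
      max ‖Vᗮ.starProjection ∘L U.starProjection‖ ‖Uᗮ.starProjection ∘L V.starProjection‖ := by
  set M := max ‖Vᗮ.starProjection ∘L U.starProjection‖ ‖Uᗮ.starProjection ∘L V.starProjection‖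
  have hM : 0 ≤ M := le_max_of_le_left (norm_nonneg _)
  refine opNorm_le_bound _ hM fun x => ?_
  set u := U.starProjection x
  set w := Uᗮ.starProjection x
  have hx : u + w = x := U.starProjection_add_starProjection_orthogonal x
  have hsplit : (U.starProjection - V.starProjection) x =
      Vᗮ.starProjection u - V.starProjection w := by
    rw [sub_apply, ← hx, map_add, map_add, V.starProjection_orthogonal_val u,
      starProjection_eq_self_iff.2 (starProjection_apply_mem U x),
      U.starProjection_apply_eq_zero_iff.2 (starProjection_apply_mem Uᗮ x)]
    abel
  have hu : ‖Vᗮ.starProjection u‖ ≤ M * ‖u‖ := by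
    have : Vᗮ.starProjection u = (Vᗮ.starProjection ∘L U.starProjection) u := by
      rw [comp_apply, starProjection_eq_self_iff.2 (starProjection_apply_mem U x)]
    rw [this]
    exact (le_opNorm _ _).trans (mul_le_mul_of_nonneg_right (le_max_left _ _) (norm_nonneg _))
  have hw : ‖V.starProjection w‖ ≤ M * ‖w‖ := by
    have : V.starProjection w = (V.starProjection ∘L Uᗮ.starProjection) w := by
      rw [comp_apply, starProjection_eq_self_iff.2 (starProjection_apply_mem Uᗮ x)]
    rw [this]
    refine (le_opNorm _ _).trans (mul_le_mul_of_nonneg_right ?_ (norm_nonneg _))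
    exact (norm_starProjection_comp_comm V Uᗮ).le.trans (le_max_right _ _)
  have horth : ⟪Vᗮ.starProjection u, V.starProjection w⟫ = 0 :=
    inner_left_of_mem_orthogonal (starProjection_apply_mem _ _) (starProjection_apply_mem _ _)
  have hpyth : ‖x‖ ^ 2 = ‖u‖ ^ 2 + ‖w‖ ^ 2 := norm_sq_eq_add_norm_sq_starProjection x U
  refine (pow_le_pow_iff_left₀ (norm_nonneg _) (mul_nonneg hM (norm_nonneg x)) two_ne_zero).1 ?_
  rw [hsplit, norm_sub_sq_real, horth, mul_pow, hpyth]
  nlinarith [mul_le_mul hu hu (norm_nonneg _) (mul_nonneg hM (norm_nonneg _)),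
    mul_le_mul hw hw (norm_nonneg _) (mul_nonneg hM (norm_nonneg _))]

end Projection

section SingularVector

variable {E E' : Type*} [NormedAddCommGroup E] [InnerProductSpace ℝ E] [FiniteDimensional ℝ E]
  [NormedAddCommGroup E'] [InnerProductSpace ℝ E'] [CompleteSpace E']

/- A maximiser `e` of `‖T ·‖` on the unit sphere is an eigenvector of `T† T` with eigenvalue
`‖T‖ ^ 2` (Rayleigh), so `⟪T a, T e⟫ = ‖T‖ ^ 2 * ⟪a, e⟫` and Cauchy–Schwarz concludes. -/
theorem exists_norm_eq_one_opNorm_mul_abs_inner_le [Nontrivial E] (T : E →L[ℝ] E') :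
    ∃ e : E, ‖e‖ = 1 ∧ ∀ a, ‖T‖ * |⟪a, e⟫| ≤ ‖T a‖ := by
  obtain ⟨e, he, hmax⟩ := (isCompact_sphere (0 : E) 1).exists_isMaxOn
    (NormedSpace.sphere_nonempty.2 zero_le_one) T.continuous.norm.continuousOn
  have he1 : ‖e‖ = 1 := by simpa using he
  have hTe : ‖T‖ = ‖T e‖ := by
    refine le_antisymm (opNorm_le_of_unit_norm (norm_nonneg _) fun x hx => ?_) ?_
    · exact hmax (by simpa using hx)
    · simpa [he1] using T.le_opNorm e
  set A := T† ∘L T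
  have hA : IsSelfAdjoint A := by
    rw [isSelfAdjoint_iff', adjoint_comp, adjoint_adjoint]
  have hre : ∀ x, A.reApplyInnerSelf x = ‖T x‖ ^ 2 :=
    fun x => (T.apply_norm_sq_eq_inner_adjoint_left x).symm
  have hmaxA : IsMaxOn A.reApplyInnerSelf (sphere 0 ‖e‖) e := fun x hx => by
    rw [he1] at hx
    show A.reApplyInnerSelf x ≤ A.reApplyInnerSelf e
    rw [hre, hre]
    exact pow_le_pow_left₀ (norm_nonneg _) (hmax hx) 2
  obtain ⟨c, hc⟩ : ∃ c : ℝ, A e = c • e :=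
    ⟨_, (hA.hasEigenvector_of_isMaxOn (norm_ne_zero_iff.1 (by simp [he1])) hmaxA).apply_eq_smul⟩
  have hinner : ∀ a, ⟪T a, T e⟫ = ‖T e‖ ^ 2 * ⟪a, e⟫ := by
    have key : ∀ a, ⟪T a, T e⟫ = c * ⟪a, e⟫ := fun a => by
      rw [← adjoint_inner_right, ← comp_apply, hc, real_inner_smul_right]
    have hc' : c = ‖T e‖ ^ 2 := by
      simpa [real_inner_self_eq_norm_sq, he1] using (key e).symm
    intro a
    rw [key, hc']
  refine ⟨e, he1, fun a => ?_⟩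
  rcases (norm_nonneg (T e)).eq_or_lt with h0 | hpos
  · simp [hTe, ← h0]
  · refine le_of_mul_le_mul_left ?_ hpos
    have := abs_real_inner_le_norm (T a) (T e)
    rw [hinner, abs_mul, abs_of_nonneg (sq_nonneg _)] at this
    rw [hTe]
    nlinarith

end SingularVector

section Subspace

variable {E E' : Type*} [NormedAddCommGroup E] [InnerProductSpace ℝ E]
  [NormedAddCommGroup E'] [InnerProductSpace ℝ E'] [CompleteSpace E']

theorem Submodule.exists_mem_norm_eq_one_opNorm_mul_abs_inner_le (U : Submodule ℝ E)
    [FiniteDimensional ℝ U] (hU : 0 < finrank ℝ U) (P : E →L[ℝ] E') :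
    ∃ e ∈ U, ‖e‖ = 1 ∧ ∀ a ∈ U, ‖P ∘L U.starProjection‖ * |⟪a, e⟫| ≤ ‖P a‖ := by
  have : Nontrivial U := Module.finrank_pos_iff.1 hU
  obtain ⟨e, he1, he⟩ := exists_norm_eq_one_opNorm_mul_abs_inner_le (P ∘L U.subtypeL)
  have hnorm : ‖P ∘L U.starProjection‖ ≤ ‖P ∘L U.subtypeL‖ :=
    calc ‖P ∘L U.starProjection‖ = ‖(P ∘L U.subtypeL) ∘L U.orthogonalProjectionOnto‖ := rfl
      _ ≤ ‖P ∘L U.subtypeL‖ * ‖U.orthogonalProjectionOnto‖ := opNorm_comp_le _ _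
      _ ≤ ‖P ∘L U.subtypeL‖ :=
        mul_le_of_le_one_right (opNorm_nonneg _) U.orthogonalProjectionOnto_norm_le
  exact ⟨e, e.2, he1, fun a ha =>
    (mul_le_mul_of_nonneg_right hnorm (abs_nonneg _)).trans (he ⟨a, ha⟩)⟩

variable [FiniteDimensional ℝ E] {U V : Submodule ℝ E} {e : E}

theorem finrank_orthogonal_span_singleton_inf_add_one (heU : e ∈ U) (he : e ≠ 0) :
    finrank ℝ ((ℝ ∙ e)ᗮ ⊓ U : Submodule ℝ E) + 1 = finrank ℝ U := by
  have := finrank_add_inf_finrank_orthogonal ((span_singleton_le_iff_mem e U).2 heU)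
  rw [finrank_span_singleton he] at this
  omega

theorem norm_le_abs_inner_add_norm_starProjection_orthogonal_span_singleton_inf
    (heU : e ∈ U) (he : ‖e‖ = 1) {a : E} (ha : a ∈ U) :
    ‖a‖ ≤ |⟪a, e⟫| + ‖((ℝ ∙ e)ᗮ ⊓ U).starProjection a‖ := by
  have hmem : a - ⟪a, e⟫ • e ∈ (ℝ ∙ e)ᗮ ⊓ U := by
    refine ⟨mem_orthogonal_singleton_iff_inner_right.2 ?_, U.sub_mem ha (U.smul_mem _ ?_)⟩
    · rw [inner_sub_right, real_inner_smul_right, real_inner_self_eq_norm_sq, he,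
        real_inner_comm]
      ring
    · exact heU
  have hperp : ⟪a, e⟫ • e ∈ ((ℝ ∙ e)ᗮ ⊓ U)ᗮ :=
    orthogonal_le inf_le_left
      (le_orthogonal_orthogonal _ (smul_mem _ _ (mem_span_singleton_self e)))
  rw [eq_starProjection_of_mem_orthogonal' hmem hperp (sub_add_cancel a _).symm]
  calc ‖a‖ = ‖⟪a, e⟫ • e + (a - ⟪a, e⟫ • e)‖ := by rw [add_sub_cancel]
    _ ≤ |⟪a, e⟫| + ‖a - ⟪a, e⟫ • e‖ := by
      grw [norm_add_le, norm_smul, he, mul_one, Real.norm_eq_abs]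

theorem norm_le_one_add_mul_norm_starProjection {σ : ℝ} {d : E}
    (hd : ‖Uᗮ.starProjection d‖ ≤ σ * ‖U.starProjection d‖) :
    ‖d‖ ≤ (1 + σ) * ‖U.starProjection d‖ :=
  calc ‖d‖ = ‖U.starProjection d + Uᗮ.starProjection d‖ := by
        rw [starProjection_add_starProjection_orthogonal]
    _ ≤ ‖U.starProjection d‖ + σ * ‖U.starProjection d‖ := by grw [norm_add_le, hd]
    _ = (1 + σ) * ‖U.starProjection d‖ := by ring

theorem norm_starProjection_orthogonal_starProjection_le {σ : ℝ} (hσ : 0 ≤ σ) {d : E}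
    (hdU : ‖Uᗮ.starProjection d‖ ≤ σ * ‖U.starProjection d‖)
    (hdV : ‖Vᗮ.starProjection d‖ ≤ σ * ‖V.starProjection d‖) :
    ‖Vᗮ.starProjection (U.starProjection d)‖ ≤ σ * (2 + σ) * ‖U.starProjection d‖ := by
  have hsplit : Vᗮ.starProjection (U.starProjection d) =
      Vᗮ.starProjection d - Vᗮ.starProjection (Uᗮ.starProjection d) := by
    rw [← map_sub, U.starProjection_orthogonal_val d, sub_sub_cancel]
  have hVd : ‖V.starProjection d‖ ≤ (1 + σ) * ‖U.starProjection d‖ :=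
    (V.norm_starProjection_apply_le d).trans (norm_le_one_add_mul_norm_starProjection hdU)
  calc ‖Vᗮ.starProjection (U.starProjection d)‖
      ≤ ‖Vᗮ.starProjection d‖ + ‖Uᗮ.starProjection d‖ := by
        rw [hsplit]
        grw [norm_sub_le, Vᗮ.norm_starProjection_apply_le (Uᗮ.starProjection d)]
    _ ≤ σ * ((1 + σ) * ‖U.starProjection d‖) + σ * ‖U.starProjection d‖ := by
        grw [hdV, hVd, hdU]
    _ = σ * (2 + σ) * ‖U.starProjection d‖ := by ring

theorem norm_le_three_mul_norm_starProjection_of_cone {σ χ : ℝ} (hσ0 : 0 ≤ σ)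
    (hσχ : σ < χ / 8) (hχ : χ < 1) (heU : e ∈ U) (he1 : ‖e‖ = 1)
    (he : ∀ a ∈ U, χ * |⟪a, e⟫| ≤ ‖Vᗮ.starProjection a‖) {d : E}
    (hdU : ‖Uᗮ.starProjection d‖ ≤ σ * ‖U.starProjection d‖)
    (hdV : ‖Vᗮ.starProjection d‖ ≤ σ * ‖V.starProjection d‖) :
    ‖d‖ ≤ 3 * ‖((ℝ ∙ e)ᗮ ⊓ U).starProjection d‖ := by
  set a := U.starProjection d
  set X := (ℝ ∙ e)ᗮ ⊓ U
  have hχ0 : 0 < χ := by linarith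
  have htilt : |⟪a, e⟫| ≤ ‖a‖ / 2 := by
    refine le_of_mul_le_mul_left ?_ hχ0
    calc χ * |⟪a, e⟫| ≤ ‖Vᗮ.starProjection a‖ := he a (starProjection_apply_mem U d)
      _ ≤ σ * (2 + σ) * ‖a‖ := norm_starProjection_orthogonal_starProjection_le hσ0 hdU hdV
      _ ≤ χ / 2 * ‖a‖ := by gcongr; nlinarith
      _ = χ * (‖a‖ / 2) := by ring
  have ha : ‖a‖ ≤ 2 * ‖X.starProjection d‖ := by
    have := norm_le_abs_inner_add_norm_starProjection_orthogonal_span_singleton_inf heU he1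
      (starProjection_apply_mem U d)
    rw [← comp_apply, starProjection_comp_starProjection_of_le inf_le_right] at this
    linarith
  calc ‖d‖ ≤ (1 + σ) * ‖a‖ := norm_le_one_add_mul_norm_starProjection hdU
    _ ≤ 3 / 2 * (2 * ‖X.starProjection d‖) := by gcongr; linarith
    _ = 3 * ‖X.starProjection d‖ := by ring

end Subspace

section Graph

variable {n : ℕ}

theorem graphSet_subset_cone {F : Submodule ℝ (EuclideanSpace ℝ (Fin n))} {f : F → Fᗮ}
    {σ : ℝ} (hf : ∀ a b : F, ‖f a - f b‖ ≤ σ * ‖a - b‖) {x : EuclideanSpace ℝ (Fin n)}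
    (hx : x ∈ graphSet F f) : graphSet F f ⊆ cone x σ F := by
  obtain ⟨w, rfl⟩ := hx
  rintro _ ⟨z, rfl⟩
  have hsplit : (z + f z : EuclideanSpace ℝ (Fin n)) - (w + f w) =
      ((z - w : F) : EuclideanSpace ℝ (Fin n)) + ((f z - f w : Fᗮ) : EuclideanSpace ℝ (Fin n)) := by
    push_cast; abel
  have hF : pr F ((z + f z : EuclideanSpace ℝ (Fin n)) - (w + f w)) = (z - w : F) :=
    eq_starProjection_of_mem_orthogonal' (z - w).2 (f z - f w).2 hsplit
  have hFperp : pr Fᗮ ((z + f z : EuclideanSpace ℝ (Fin n)) - (w + f w)) = (f z - f w : Fᗮ) :=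
    eq_starProjection_of_mem_orthogonal' (f z - f w).2
      (le_orthogonal_orthogonal F (z - w).2) (hsplit.trans (add_comm _ _))
  show ‖pr Fᗮ _‖ ≤ σ * ‖pr F _‖
  rw [hF, hFperp, norm_coe, norm_coe]
  exact hf z w

theorem exists_lipschitzWith_subset_graphSet {X : Submodule ℝ (EuclideanSpace ℝ (Fin n))}
    {K : Set (EuclideanSpace ℝ (Fin n))} {C : ℝ≥0}
    (hK : ∀ p ∈ K, ∀ q ∈ K, ‖p - q‖ ≤ C * ‖pr X (p - q)‖) :
    ∃ S : X → Xᗮ, (∃ L : ℝ≥0, LipschitzWith L S) ∧ K ⊆ graphSet X S := by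
  have hinj : Set.InjOn X.orthogonalProjectionOnto K := fun p hp q hq hpq => by
    have h0 : pr X (p - q) = 0 := by
      rw [map_sub, sub_eq_zero]
      exact congrArg Subtype.val hpq
    simpa [h0, sub_eq_zero] using hK p hp q hq
  set S₀ : X → Xᗮ := fun x =>
    Xᗮ.orthogonalProjectionOnto (Function.invFunOn X.orthogonalProjectionOnto K x)
  have hS₀ : ∀ p ∈ K, S₀ (X.orthogonalProjectionOnto p) = Xᗮ.orthogonalProjectionOnto p :=
    fun p hp => by simp only [S₀, hinj.leftInvOn_invFunOn hp]
  have hlip : LipschitzOnWith C S₀ (X.orthogonalProjectionOnto '' K) := by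
    refine LipschitzOnWith.of_dist_le_mul ?_
    rintro _ ⟨p, hp, rfl⟩ _ ⟨q, hq, rfl⟩
    rw [hS₀ p hp, hS₀ q hq, dist_eq_norm, dist_eq_norm, ← map_sub, ← map_sub]
    calc ‖Xᗮ.orthogonalProjectionOnto (p - q)‖ ≤ ‖p - q‖ :=
          Xᗮ.norm_orthogonalProjectionOnto_apply_le _
      _ ≤ C * ‖pr X (p - q)‖ := hK p hp q hq
      _ = C * ‖X.orthogonalProjectionOnto (p - q)‖ := rfl
  obtain ⟨S, hS, hS₀S⟩ := hlip.extend_finite_dimension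
  refine ⟨S, ⟨_, hS⟩, fun p hp => ⟨X.orthogonalProjectionOnto p, ?_⟩⟩
  show _ + (S _ : EuclideanSpace ℝ (Fin n)) = p
  rw [← hS₀S (Set.mem_image_of_mem _ hp), hS₀ p hp]
  exact X.starProjection_add_starProjection_orthogonal p

theorem dimH_graphSet_le {X : Submodule ℝ (EuclideanSpace ℝ (Fin n))} {S : X → Xᗮ} {L : ℝ≥0}
    (hS : LipschitzWith L S) : dimH (graphSet X S) ≤ finrank ℝ X :=
  ((isometry_subtype_coe.lipschitz.add (isometry_subtype_coe.lipschitz.comp hS)).dimH_range_le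
    ).trans_eq (dimH_univ_eq_finrank X)

end Graph

/- `pr W` is `W.starProjection` by definition, so membership in `cone q σ W` is literally the
hypothesis of `norm_le_three_mul_norm_starProjection_of_cone` for `d = p - q`. -/
theorem exists_lipschitzWith_inter_graphSet_subset_graphSet {n m : ℕ} (hm : 1 ≤ m) {σ χ : ℝ}
    (hσ0 : 0 ≤ σ) (hσχ : σ < χ / 8) (hχ : χ < 1) {U V : Submodule ℝ (EuclideanSpace ℝ (Fin n))}
    (hU : finrank ℝ U = m) (hUV : χ ≤ ‖pr Vᗮ ∘L pr U‖) {u : U → Uᗮ} {v : V → Vᗮ}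
    (hu : ∀ a b : U, ‖u a - u b‖ ≤ σ * ‖a - b‖) (hv : ∀ a b : V, ‖v a - v b‖ ≤ σ * ‖a - b‖) :
    ∃ X : Submodule ℝ (EuclideanSpace ℝ (Fin n)), finrank ℝ X = m - 1 ∧
      ∃ S : X → Xᗮ, (∃ L : ℝ≥0, LipschitzWith L S) ∧
        graphSet U u ∩ graphSet V v ⊆ graphSet X S := by
  obtain ⟨e, heU, he1, he⟩ :=
    U.exists_mem_norm_eq_one_opNorm_mul_abs_inner_le (by omega) (pr Vᗮ)
  have he' : ∀ a ∈ U, χ * |⟪a, e⟫| ≤ ‖pr Vᗮ a‖ := fun a ha =>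
    (mul_le_mul_of_nonneg_right hUV (abs_nonneg _)).trans (he a ha)
  refine ⟨(ℝ ∙ e)ᗮ ⊓ U, ?_, exists_lipschitzWith_subset_graphSet (C := 3) fun p hp q hq => ?_⟩
  · have := finrank_orthogonal_span_singleton_inf_add_one heU (norm_ne_zero_iff.1 (by simp [he1]))
    omega
  · exact_mod_cast norm_le_three_mul_norm_starProjection_of_cone hσ0 hσχ hχ heU he1 he'
      (graphSet_subset_cone hu hq.1 hp.1) (graphSet_subset_cone hv hq.2 hp.2)

theorem intersecting_lipschitz_graphs_general {n m : ℕ} (hm : 1 ≤ m)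
    (σ χ : ℝ) (hσ0 : 0 ≤ σ) (hσχ : σ < χ / 8) (hχ : χ / 8 < 1 / 8)
    (F G : Submodule ℝ (EuclideanSpace ℝ (Fin n)))
    (hF : Module.finrank ℝ F = m) (hG : Module.finrank ℝ G = m)
    (hang : χ ≤ ‖pr F - pr G‖)
    (f : F → Fᗮ) (g : G → Gᗮ)
    (hf : ∀ a b : F, ‖f a - f b‖ ≤ σ * ‖a - b‖)
    (hg : ∀ a b : G, ‖g a - g b‖ ≤ σ * ‖a - b‖) :
    (∃ j ≤ m - 1, ∃ X : Submodule ℝ (EuclideanSpace ℝ (Fin n)),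
      Module.finrank ℝ X = j ∧
      ∃ S : X → Xᗮ, (∃ K : NNReal, LipschitzWith K S) ∧
        graphSet F f ∩ graphSet G g ⊆ graphSet X S) ∧
    dimH (graphSet F f ∩ graphSet G g) ≤ (m - 1 : ℕ) := by
  have hχ1 : χ < 1 := by linarith
  obtain ⟨X, hX, S, ⟨L, hS⟩, hsub⟩ : ∃ X : Submodule ℝ (EuclideanSpace ℝ (Fin n)),
      finrank ℝ X = m - 1 ∧ ∃ S : X → Xᗮ, (∃ L : ℝ≥0, LipschitzWith L S) ∧
        graphSet F f ∩ graphSet G g ⊆ graphSet X S := by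
    rcases le_max_iff.1 (hang.trans (norm_starProjection_sub_le_max F G)) with hFG | hGF
    · exact exists_lipschitzWith_inter_graphSet_subset_graphSet hm hσ0 hσχ hχ1 hF hFG hf hg
    · rw [Set.inter_comm]
      exact exists_lipschitzWith_inter_graphSet_subset_graphSet hm hσ0 hσχ hχ1 hG hGF hg hf
  refine ⟨⟨m - 1, le_rfl, X, hX, S, ⟨L, hS⟩, hsub⟩, ?_⟩
  calc dimH (graphSet F f ∩ graphSet G g) ≤ dimH (graphSet X S) := dimH_mono hsub
    _ ≤ finrank ℝ X := dimH_graphSet_le hS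
    _ = (m - 1 : ℕ) := by rw [hX]

/-- Intersecting Lipschitz Graphs: if `0 ≤ σ < χ/8 < 1/8`, `∠(F,G) ≥ χ`, and
`f, g` are `σ`-Lipschitz with `f(0) = 0 = g(0)`, then `graph f ∩ graph g` is
contained in the graph of a Lipschitz function over a `j`-plane with
`j ≤ m-1`; in particular its Hausdorff dimension is at most `m-1`. -/
theorem intersecting_lipschitz_graphs {n m : ℕ} (hm : 1 ≤ m)
    (σ χ : ℝ) (hσ0 : 0 ≤ σ) (hσχ : σ < χ / 8) (hχ : χ / 8 < 1 / 8)
    (F G : Submodule ℝ (EuclideanSpace ℝ (Fin n)))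
    (hF : Module.finrank ℝ F = m) (hG : Module.finrank ℝ G = m)
    (hang : χ ≤ ‖pr F - pr G‖)
    (f : F → Fᗮ) (g : G → Gᗮ) (hf0 : f 0 = 0) (hg0 : g 0 = 0)
    (hf : ∀ a b : F, ‖f a - f b‖ ≤ σ * ‖a - b‖)
    (hg : ∀ a b : G, ‖g a - g b‖ ≤ σ * ‖a - b‖) :
    (∃ j ≤ m - 1, ∃ X : Submodule ℝ (EuclideanSpace ℝ (Fin n)),
      Module.finrank ℝ X = j ∧
      ∃ S : X → Xᗮ, (∃ K : NNReal, LipschitzWith K S) ∧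
        graphSet F f ∩ graphSet G g ⊆ graphSet X S) ∧
    dimH (graphSet F f ∩ graphSet G g) ≤ (m - 1 : ℕ) :=
  intersecting_lipschitz_graphs_general hm σ χ hσ0 hσχ hχ F G hF hG hang f g hf hg
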